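/- arXiv:1606.00033 — 3 statements merged into one kernel-verified Lean document; each statement's English description precedes it below -/
import Mathlib

section
/- Screening rule correctness: Suppose c : ℝ → ℝ satisfies a KKT-type condition: |c(λ)| ≤ λ whenever the associated solution coordinate ω(λ) = 0, and |c(λ)| = λ with c(λ) = λ·sign(ω(λ)) whenever ω(λ) ≠ 0. Suppose c is nonexpansive in λ: |c(λ) − c(λ')| ≤ |λ − λ'|. If λ_k ≤ λ_{k−1} and |c(λ_{k−1})| < 2λ_k − λ_{k−1}, then |c(λ_k)| < λ_k, hence ω(λ_k) = 0. -/
/-- Screening rule correctness: under KKT-type conditions and nonexpansiveness of `c`,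
if `λ_k ≤ λ_{k−1}` and `|c(λ_{k−1})| < 2λ_k − λ_{k−1}`, then `|c(λ_k)| < λ_k`
and hence `ω(λ_k) = 0`. -/
theorem stmt_2 (c ω : ℝ → ℝ)
    (hne : ∀ l l' : ℝ, |c l - c l'| ≤ |l - l'|)
    (hkkt0 : ∀ l : ℝ, ω l = 0 → |c l| ≤ l)
    (hkkt1 : ∀ l : ℝ, ω l ≠ 0 → c l = l * Real.sign (ω l))
    (lk lk1 : ℝ) (hpos : 0 < lk) (hle : lk ≤ lk1)
    (h : |c lk1| < 2 * lk - lk1) :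
    |c lk| < lk ∧ ω lk = 0 := by
  have hlt : |c lk| < lk := by
    have h1 : |c lk| ≤ |c lk - c lk1| + |c lk1| := by
      have := abs_sub_abs_le_abs_sub (c lk) (c lk1); linarith [abs_nonneg (c lk1)]
    have h2 := hne lk lk1
    have h3 : |lk - lk1| = lk1 - lk := by rw [abs_sub_comm]; exact abs_of_nonneg (by linarith)
    linarith
  refine ⟨hlt, ?_⟩
  by_contra hω
  have hc := hkkt1 lk hω
  rcases lt_trichotomy (ω lk) 0 with h0 | h0 | h0
  · rw [Real.sign_of_neg h0] at hc
    rw [hc] at hlt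
    simp [abs_of_nonpos, hpos.le] at hlt
  · exact hω h0
  · rw [Real.sign_of_pos h0] at hc
    rw [hc] at hlt
    simp [abs_of_pos hpos] at hlt
end

section
/- Lasso saturation: for any b ∈ ℝ^m, A ∈ ℝ^{m×q} with q > m, and λ > 0, there exists a minimizer ω̂ of (1/2)‖b − Aω‖₂² + λ‖ω‖₁ with at most m nonzero entries. -/
/-!
The objective `½‖b − Aω‖² + λ‖ω‖₁` is continuous and coercive, so it has minimizers; take one
of least support. If its support had more than `m` elements, the corresponding columns of `A`
would be dependent, giving `c ≠ 0` in the kernel of `A` supported inside the support of `ω`.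
Along `ω + t c` the fit is constant and, for small `|t|`, the `ℓ¹` norm is affine in `t`, so by
minimality it is constant as well; pushing `t` until a coordinate vanishes yields a minimizer of
strictly smaller support.
-/

open Finset Function Filter
open scoped Matrix

section L1Norm

variable {ι : Type*} [Fintype ι]

lemma abs_add_eq_of_abs_le {x y : ℝ} (h : |y| ≤ |x|) : |x + y| = |x| + Real.sign x * y := by
  obtain ⟨hy₁, hy₂⟩ := abs_le.mp h
  rcases lt_trichotomy x 0 with hx | rfl | hx
  · rw [Real.sign_of_neg hx, abs_of_neg hx, abs_of_nonpos (by linarith [abs_of_neg hx])]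
    ring
  · simp_all
  · rw [Real.sign_of_pos hx, abs_of_pos hx, abs_of_nonneg (by linarith [abs_of_pos hx])]
    ring

lemma sum_abs_add_mul_of_abs_le {ω c : ι → ℝ} {t : ℝ} (h : ∀ j, |t * c j| ≤ |ω j|) :
    ∑ j, |ω j + t * c j| = ∑ j, |ω j| + t * ∑ j, Real.sign (ω j) * c j := by
  rw [mul_sum, ← sum_add_distrib]
  refine sum_congr rfl fun j _ => ?_
  rw [abs_add_eq_of_abs_le (h j)]
  ring

lemma norm_le_sum_abs (ω : ι → ℝ) : ‖ω‖ ≤ ∑ j, |ω j| :=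
  (pi_norm_le_iff_of_nonneg (by positivity)).mpr fun i =>
    single_le_sum (f := fun j => |ω j|) (fun j _ => abs_nonneg _) (mem_univ i)

lemma exists_forall_le_add_mul_sum_abs {f : (ι → ℝ) → ℝ} (hf : Continuous f) {C : ℝ}
    (hC : ∀ ω, C ≤ f ω) {lam : ℝ} (hlam : 0 < lam) :
    ∃ ω : ι → ℝ, ∀ ω', f ω + lam * ∑ j, |ω j| ≤ f ω' + lam * ∑ j, |ω' j| := by
  refine Continuous.exists_forall_le (by fun_prop) ?_
  refine tendsto_atTop_mono (fun ω => ?_) <| tendsto_atTop_add_const_left _ C <|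
    tendsto_norm_cocompact_atTop.const_mul_atTop hlam
  gcongr
  exacts [hC ω, norm_le_sum_abs ω]

end L1Norm

section Sparsify

variable {ι : Type*} [Fintype ι]

lemma exists_abs_mul_le_and_add_mul_eq_zero {ω c : ι → ℝ} (hc : c ≠ 0)
    (hsupp : support c ⊆ support ω) :
    ∃ t : ℝ, (∀ j, |t * c j| ≤ |ω j|) ∧ ∃ j, ω j ≠ 0 ∧ ω j + t * c j = 0 := by
  obtain ⟨j₀, hj₀, hmin⟩ := Set.exists_min_image (support c) (fun j => |ω j| / |c j|)
    (Set.toFinite _) (support_nonempty_iff.mpr hc)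
  refine ⟨-ω j₀ / c j₀, fun j => ?_, j₀, hsupp hj₀, by field_simp [mem_support.mp hj₀]; ring⟩
  by_cases hj : c j = 0
  · simp [hj]
  · have hcj : 0 < |c j| := abs_pos.mpr hj
    calc |-ω j₀ / c j₀ * c j| = |ω j₀| / |c j₀| * |c j| := by rw [abs_mul, abs_div, abs_neg]
      _ ≤ |ω j| / |c j| * |c j| := mul_le_mul_of_nonneg_right (hmin j hj) (abs_nonneg _)
      _ = |ω j| := div_mul_cancel₀ _ hcj.ne'

lemma exists_minimizer_support_ssubset {f : (ι → ℝ) → ℝ} {lam : ℝ} {ω c : ι → ℝ}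
    (hmin : ∀ ω', f ω + lam * ∑ j, |ω j| ≤ f ω' + lam * ∑ j, |ω' j|)
    (hf : ∀ t : ℝ, f (ω + t • c) = f ω) (hc : c ≠ 0) (hsupp : support c ⊆ support ω) :
    ∃ ω', (∀ ω'', f ω' + lam * ∑ j, |ω' j| ≤ f ω'' + lam * ∑ j, |ω'' j|) ∧
      support ω' ⊂ support ω := by
  obtain ⟨t, hbound, j₀, hj₀, hzero⟩ := exists_abs_mul_le_and_add_mul_eq_zero hc hsupp
  set σ := ∑ j, Real.sign (ω j) * c j
  have hline : ∀ s : ℝ, |s| = |t| →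
      f (ω + s • c) + lam * ∑ j, |(ω + s • c) j| = f ω + lam * ∑ j, |ω j| + lam * (s * σ) := by
    intro s hs
    have hbound' : ∀ j, |s * c j| ≤ |ω j| := fun j => by rw [abs_mul, hs, ← abs_mul]; exact hbound j
    simp only [Pi.add_apply, Pi.smul_apply, smul_eq_mul, hf, sum_abs_add_mul_of_abs_le hbound']
    ring
  -- minimality at both `ω + t • c` and `ω - t • c` kills the slope
  have hflat : lam * (t * σ) = 0 := by
    have h₁ := hline t rfl ▸ hmin (ω + t • c)
    have h₂ := hline (-t) (abs_neg t) ▸ hmin (ω + (-t) • c)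
    linarith
  refine ⟨ω + t • c, fun ω'' => ?_, ?_⟩
  · rw [hline t rfl, hflat, add_zero]
    exact hmin ω''
  · refine Set.ssubset_iff_of_subset (fun j hj => ?_) |>.mpr ⟨j₀, hj₀, by simpa using hzero⟩
    by_contra hωj
    have hcj : c j = 0 := by_contra fun h => hωj (hsupp h)
    simp_all

end Sparsify

lemma Matrix.exists_mulVec_eq_zero_support_subset {K m n : Type*} [Field K] [Fintype m]
    [Fintype n] (A : Matrix m n K) {s : Set n} (hs : Fintype.card m < s.ncard) :
    ∃ c : n → K, c ≠ 0 ∧ A *ᵥ c = 0 ∧ support c ⊆ s := by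
  classical
  have hdep : ¬LinearIndepOn K (fun j => Aᵀ j) (s.toFinset : Set n) := fun h => by
    have := h.fintype_card_le_finrank
    simp only [Module.finrank_fintype_fun_eq_card, Finset.coe_sort_coe, Fintype.card_coe,
      ← Set.ncard_eq_toFinset_card'] at this
    omega
  obtain ⟨g, hg, j₀, hj₀, hgj₀⟩ := not_linearIndepOn_finset_iff.mp hdep
  refine ⟨s.indicator g, fun h => hgj₀ ?_, ?_, fun j hj => ?_⟩
  · simpa [Set.indicator_of_mem (Set.mem_toFinset.mp hj₀)] using congrFun h j₀
  · ext i
    simpa [Matrix.mulVec, dotProduct, Set.indicator_apply, mul_comm, Finset.sum_apply,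
      ← Finset.sum_filter, Set.filter_mem_univ_eq_toFinset] using congrFun hg i
  · by_contra hjs
    exact hj (Set.indicator_of_notMem hjs g)

theorem stmt_13_general (m q : ℕ) (b : Fin m → ℝ) (A : Matrix (Fin m) (Fin q) ℝ)
    (lam : ℝ) (hlam : 0 < lam) :
    ∃ ω : Fin q → ℝ,
      (∀ ω' : Fin q → ℝ,
        (1 / 2) * ∑ i, (b i - A.mulVec ω i) ^ 2 + lam * ∑ j, |ω j| ≤
        (1 / 2) * ∑ i, (b i - A.mulVec ω' i) ^ 2 + lam * ∑ j, |ω' j|) ∧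
      Nat.card {j : Fin q // ω j ≠ 0} ≤ m := by
  set f : (Fin q → ℝ) → ℝ := fun ω => (1 / 2) * ∑ i, (b i - (A *ᵥ ω) i) ^ 2
  set M := {ω : Fin q → ℝ | ∀ ω', f ω + lam * ∑ j, |ω j| ≤ f ω' + lam * ∑ j, |ω' j|}
  have hM : M.Nonempty :=
    exists_forall_le_add_mul_sum_abs (by fun_prop) (fun ω => by positivity) hlam
  set ω := argminOn (fun ω => (support ω).ncard) M hM
  have hω : ω ∈ M := argminOn_mem _ M hM
  refine ⟨ω, hω, ?_⟩
  by_contra! hcard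
  obtain ⟨c, hc, hAc, hsupp⟩ :=
    A.exists_mulVec_eq_zero_support_subset (s := support ω) (by rwa [Fintype.card_fin])
  obtain ⟨ω', hω', hlt⟩ := exists_minimizer_support_ssubset hω
    (fun t => by simp [f, Matrix.mulVec_add, Matrix.mulVec_smul, hAc]) hc hsupp
  exact not_lt_argminOn (fun ω => (support ω).ncard) M hω' (Set.ncard_lt_ncard hlt)

/-- Lasso saturation: for any `b ∈ ℝ^m`, `A ∈ ℝ^{m×q}` with `q > m`, and `λ > 0`, there
exists a minimizer of `(1/2)‖b − Aω‖₂² + λ‖ω‖₁` with at most `m` nonzero entries. -/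
theorem stmt_13 (m q : ℕ) (hq : m < q) (b : Fin m → ℝ) (A : Matrix (Fin m) (Fin q) ℝ)
    (lam : ℝ) (hlam : 0 < lam) :
    ∃ ω : Fin q → ℝ,
      (∀ ω' : Fin q → ℝ,
        (1 / 2) * ∑ i, (b i - A.mulVec ω i) ^ 2 + lam * ∑ j, |ω j| ≤
        (1 / 2) * ∑ i, (b i - A.mulVec ω' i) ^ 2 + lam * ∑ j, |ω' j|) ∧
      Nat.card {j : Fin q // ω j ≠ 0} ≤ m :=
  stmt_13_general m q b A lam hlam
end

section
/- The set of lasso solutions is convex, and all lasso solutions share the same fitted value: if ω̂₁ and ω̂₂ both minimize (1/2)‖b − Aω‖₂² + λ‖ω‖₁ with λ > 0, then Aω̂₁ = Aω̂₂ and ‖ω̂₁‖₁ = ‖ω̂₂‖₁. -/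
/-- Key convexity inequality for the lasso objective. -/
lemma lasso_conv_aux (m q : ℕ) (b : Fin m → ℝ) (A : Matrix (Fin m) (Fin q) ℝ)
    (lam : ℝ) (hlam : 0 ≤ lam) (x y : Fin q → ℝ) (a c : ℝ)
    (ha : 0 ≤ a) (hc : 0 ≤ c) (hac : a + c = 1) :
    (1 / 2) * ∑ i, (b i - A.mulVec (a • x + c • y) i) ^ 2
      + lam * ∑ j, |(a • x + c • y) j|
    ≤ a * ((1 / 2) * ∑ i, (b i - A.mulVec x i) ^ 2 + lam * ∑ j, |x j|)
      + c * ((1 / 2) * ∑ i, (b i - A.mulVec y i) ^ 2 + lam * ∑ j, |y j|) := by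
  have hmv : A.mulVec (a • x + c • y) = a • A.mulVec x + c • A.mulVec y := by
    simp [Matrix.mulVec_add, Matrix.mulVec_smul]
  have hq : ∑ i, (b i - A.mulVec (a • x + c • y) i) ^ 2
      ≤ a * ∑ i, (b i - A.mulVec x i) ^ 2 + c * ∑ i, (b i - A.mulVec y i) ^ 2 := by
    rw [hmv, Finset.mul_sum, Finset.mul_sum, ← Finset.sum_add_distrib]
    refine Finset.sum_le_sum fun i _ => ?_
    simp only [Pi.add_apply, Pi.smul_apply, smul_eq_mul]
    have hc' : c = 1 - a := by linarith
    subst hc'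
    nlinarith [mul_nonneg (mul_nonneg ha hc) (sq_nonneg (A.mulVec x i - A.mulVec y i))]
  have hl : ∑ j, |(a • x + c • y) j| ≤ a * ∑ j, |x j| + c * ∑ j, |y j| := by
    rw [Finset.mul_sum, Finset.mul_sum, ← Finset.sum_add_distrib]
    refine Finset.sum_le_sum fun j _ => ?_
    simp only [Pi.add_apply, Pi.smul_apply, smul_eq_mul]
    calc |a * x j + c * y j| ≤ |a * x j| + |c * y j| := abs_add_le _ _
      _ = a * |x j| + c * |y j| := by
          rw [abs_mul, abs_mul, abs_of_nonneg ha, abs_of_nonneg hc]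
  nlinarith [mul_le_mul_of_nonneg_left hl hlam]

/-- The set of lasso solutions is convex, and all lasso solutions share the same fitted
value `Aω̂` and the same ℓ1 norm. -/
theorem stmt_14 (m q : ℕ) (b : Fin m → ℝ) (A : Matrix (Fin m) (Fin q) ℝ)
    (lam : ℝ) (hlam : 0 < lam)
    (f : (Fin q → ℝ) → ℝ)
    (hf : f = fun ω => (1 / 2) * ∑ i, (b i - A.mulVec ω i) ^ 2 + lam * ∑ j, |ω j|)
    (ω1 ω2 : Fin q → ℝ) (h1 : ∀ ω, f ω1 ≤ f ω) (h2 : ∀ ω, f ω2 ≤ f ω) :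
    Convex ℝ {ω : Fin q → ℝ | ∀ ω', f ω ≤ f ω'} ∧
    A.mulVec ω1 = A.mulVec ω2 ∧ ∑ j, |ω1 j| = ∑ j, |ω2 j| := by
  have hconv : ∀ (x y : Fin q → ℝ) (a c : ℝ), 0 ≤ a → 0 ≤ c → a + c = 1 →
      f (a • x + c • y) ≤ a * f x + c * f y := by
    intro x y a c ha hc hac
    simp only [hf]
    exact lasso_conv_aux m q b A lam hlam.le x y a c ha hc hac
  have hcv : Convex ℝ {ω : Fin q → ℝ | ∀ ω', f ω ≤ f ω'} := by
    intro x hx y hy a c ha hc hac ω'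
    calc f (a • x + c • y) ≤ a * f x + c * f y := hconv x y a c ha hc hac
      _ ≤ a * f ω' + c * f ω' := by
          gcongr
          exacts [hx ω', hy ω']
      _ = f ω' := by rw [← add_mul, hac, one_mul]
  -- midpoint
  set w := (1/2 : ℝ) • ω1 + (1/2 : ℝ) • ω2 with hw
  have hmv : A.mulVec w = (1/2 : ℝ) • A.mulVec ω1 + (1/2 : ℝ) • A.mulVec ω2 := by
    simp [hw, Matrix.mulVec_add, Matrix.mulVec_smul]
  have h12 : f ω1 = f ω2 := le_antisymm (h1 ω2) (h2 ω1)
  -- exact quadratic identity with remainder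
  have hqid : ∑ i, (b i - A.mulVec w i) ^ 2
      = (1/2) * ∑ i, (b i - A.mulVec ω1 i) ^ 2
        + (1/2) * ∑ i, (b i - A.mulVec ω2 i) ^ 2
        - (1/4) * ∑ i, (A.mulVec ω1 i - A.mulVec ω2 i) ^ 2 := by
    rw [Finset.mul_sum, Finset.mul_sum, Finset.mul_sum, ← Finset.sum_add_distrib,
      ← Finset.sum_sub_distrib]
    refine Finset.sum_congr rfl fun i _ => ?_
    rw [hmv]
    simp only [Pi.add_apply, Pi.smul_apply, smul_eq_mul]
    ring
  have hl : ∑ j, |w j| ≤ (1/2) * ∑ j, |ω1 j| + (1/2) * ∑ j, |ω2 j| := by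
    rw [Finset.mul_sum, Finset.mul_sum, ← Finset.sum_add_distrib]
    refine Finset.sum_le_sum fun j _ => ?_
    simp only [hw, Pi.add_apply, Pi.smul_apply, smul_eq_mul]
    calc |1/2 * ω1 j + 1/2 * ω2 j| ≤ |1/2 * ω1 j| + |1/2 * ω2 j| := abs_add_le _ _
      _ = 1/2 * |ω1 j| + 1/2 * |ω2 j| := by
          rw [abs_mul, abs_mul]; norm_num [abs_of_nonneg]
  have hfw : f w ≤ f ω1 - (1/8) * ∑ i, (A.mulVec ω1 i - A.mulVec ω2 i) ^ 2 := by
    have := h12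
    simp only [hf] at this ⊢
    nlinarith [mul_le_mul_of_nonneg_left hl hlam.le]
  have h1w := h1 w
  have hsum0 : ∑ i, (A.mulVec ω1 i - A.mulVec ω2 i) ^ 2 ≤ 0 := by linarith
  have hAeq : A.mulVec ω1 = A.mulVec ω2 := by
    funext i
    have hnn : ∀ i ∈ Finset.univ, (0:ℝ) ≤ (A.mulVec ω1 i - A.mulVec ω2 i) ^ 2 :=
      fun i _ => sq_nonneg _
    have := (Finset.sum_eq_zero_iff_of_nonneg hnn).mp
      (le_antisymm hsum0 (Finset.sum_nonneg hnn))
    have := this i (Finset.mem_univ i)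
    have := sq_eq_zero_iff.mp this
    linarith
  refine ⟨hcv, hAeq, ?_⟩
  have hqeq : ∑ i, (b i - A.mulVec ω1 i) ^ 2 = ∑ i, (b i - A.mulVec ω2 i) ^ 2 := by
    rw [hAeq]
  simp only [hf] at h12
  have : lam * ∑ j, |ω1 j| = lam * ∑ j, |ω2 j| := by linarith
  exact mul_left_cancel₀ (ne_of_gt hlam) this
end
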